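/- arXiv:2107.08744 — 3 statements merged into one kernel-verified Lean document; each statement's English description precedes it below -/
import Mathlib

section
/- Let X be a set, I ⊆ X, and let f, g be permutations of X such that the support of g is contained in I and f(I) ∩ I = ∅. Then the commutator [g,f] := g ∘ f ∘ g⁻¹ ∘ f⁻¹ agrees with g on all points of I, and the support of [g,f] is contained in I ∪ f(I). -/
/-!
Outside `f '' I` the map `f⁻¹` lands outside `I`, where `g⁻¹` acts trivially, so `g f g⁻¹ f⁻¹`
acts there as `g f f⁻¹ = g`. Since `I` misses `f '' I`, this covers `I`; and outside
`I ∪ f '' I` the commutator agrees with `g`, which is the identity there.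
-/

namespace Equiv.Perm

variable {X : Type*} {I : Set X} {g : Perm X}

theorem apply_eq_self_of_support_subset (hg : {x : X | g x ≠ x} ⊆ I) {x : X} (hx : x ∉ I) :
    g x = x :=
  not_not.mp fun hgx => hx (hg hgx)

theorem commutator_apply_eq_of_notMem_image (f : Perm X) (hg : {x : X | g x ≠ x} ⊆ I)
    {x : X} (hx : x ∉ f '' I) : (g * f * g⁻¹ * f⁻¹) x = g x := by
  have hfx : f⁻¹ x ∉ I := fun h => hx (Set.mem_image_equiv.mpr h)
  have hg_inv : g⁻¹ (f⁻¹ x) = f⁻¹ x :=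
    inv_eq_iff_eq.mpr (apply_eq_self_of_support_subset hg hfx).symm
  simp only [mul_apply, hg_inv]
  exact congrArg g (f.apply_symm_apply x)

end Equiv.Perm

open Equiv.Perm in
theorem stmt_7 {X : Type*} (I : Set X) (f g : Equiv.Perm X)
    (hg : {x : X | g x ≠ x} ⊆ I) (hf : f '' I ∩ I = ∅) :
    (∀ x ∈ I, (g * f * g⁻¹ * f⁻¹) x = g x) ∧
    {x : X | (g * f * g⁻¹ * f⁻¹) x ≠ x} ⊆ I ∪ f '' I := by
  refine ⟨fun x hxI => commutator_apply_eq_of_notMem_image f hg fun hxf => ?_, fun x hx => ?_⟩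
  · exact hf.subset ⟨hxf, hxI⟩
  · by_contra hxU
    rw [Set.mem_union, not_or] at hxU
    exact hx ((commutator_apply_eq_of_notMem_image f hg hxU.2).trans
      (apply_eq_self_of_support_subset hg hxU.1))
end

section
/- Let X be a set, I ⊆ X, and let f, g, h be permutations of X such that the supports of g and h are both contained in I and f(I) ∩ I = ∅. Then [[g,f],h] = [g,h], where [a,b] denotes the commutator a ∘ b ∘ a⁻¹ ∘ b⁻¹. -/
open scoped commutatorElement

/-!
Writing `⁅g, f⁆ = g * (f * g⁻¹ * f⁻¹)`, the conjugate `f * g⁻¹ * f⁻¹` is supported in `f '' I`,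
hence commutes with `h`, and a factor commuting with `h` drops out of a commutator with `h`.
-/

theorem commutatorElement_mul_left_of_commute {G : Type*} [Group G] {g k h : G}
    (hkh : Commute k h) : ⁅g * k, h⁆ = ⁅g, h⁆ := by
  rw [commutatorElement_def, commutatorElement_def, mul_assoc g k h, hkh.eq]
  group

namespace Equiv.Perm

variable {X : Type*}

theorem set_support_conj (f σ : Perm X) :
    {x | (f * σ * f⁻¹) x ≠ x} = f '' {x | σ x ≠ x} := by
  ext x
  rw [Set.mem_image_equiv]
  simp only [Set.mem_ofPred_eq, mul_apply, ne_eq, ← eq_symm_apply, inv_def]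

theorem disjoint_of_disjoint_set_support {σ τ : Perm X}
    (hστ : _root_.Disjoint {x | σ x ≠ x} {x | τ x ≠ x}) : σ.Disjoint τ := by
  intro x
  by_contra! hx
  exact Set.disjoint_left.1 hστ hx.1 hx.2

end Equiv.Perm

theorem stmt_8 {X : Type*} (I : Set X) (f g h : Equiv.Perm X)
    (hg : {x : X | g x ≠ x} ⊆ I) (hh : {x : X | h x ≠ x} ⊆ I)
    (hf : f '' I ∩ I = ∅) :
    ⁅⁅g, f⁆, h⁆ = ⁅g, h⁆ := by
  have hconj : (f * g⁻¹ * f⁻¹).Disjoint h := by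
    apply Equiv.Perm.disjoint_of_disjoint_set_support
    rw [Equiv.Perm.set_support_conj, Equiv.Perm.inv_def, Equiv.Perm.set_support_symm_eq]
    exact (Set.disjoint_iff_inter_eq_empty.2 hf).mono (Set.image_mono hg) hh
  calc ⁅⁅g, f⁆, h⁆ = ⁅g * (f * g⁻¹ * f⁻¹), h⁆ := by
        rw [commutatorElement_def g f]; group
    _ = ⁅g, h⁆ := commutatorElement_mul_left_of_commute hconj.commute
end

section
/- Let X be a set, G a subgroup of the permutation group of X, N and L subgroups of G with N normalized by L, and let f ∈ N. Suppose I ⊆ X satisfies f(I) ∩ I = ∅. Then for all g, h ∈ L whose supports are contained in I, the commutator [g,h] belongs to N. -/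
/-!
Since `f` moves `I` off itself, the conjugate `f g f⁻¹` is supported on `f '' I`, disjoint from the
support of `h`, so the two commute. This makes `⁅⁅g, f⁆, h⁆ = ⁅g, h⁆`, and `⁅g, f⁆ ∈ N` because
`L` normalizes `N`; normalizing once more puts `⁅⁅g, f⁆, h⁆` in `N`.
-/

open scoped commutatorElement

theorem commutatorElement_mul_inv_left_of_commute {G : Type*} [Group G] {g c h : G}
    (hc : Commute c h) : ⁅g * c⁻¹, h⁆ = ⁅g, h⁆ := by
  have hconj : c⁻¹ * h * c = h := by rw [hc.inv_left.eq, inv_mul_cancel_right]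
  calc ⁅g * c⁻¹, h⁆ = g * (c⁻¹ * h * c) * g⁻¹ * h⁻¹ := by rw [commutatorElement_def]; group
    _ = ⁅g, h⁆ := by rw [hconj, commutatorElement_def]

theorem commutatorElement_commutatorElement_left_of_commute {G : Type*} [Group G] {g f h : G}
    (hc : Commute (f * g * f⁻¹) h) : ⁅⁅g, f⁆, h⁆ = ⁅g, h⁆ := by
  have hgf : ⁅g, f⁆ = g * (f * g * f⁻¹)⁻¹ := by rw [commutatorElement_def]; group
  rw [hgf, commutatorElement_mul_inv_left_of_commute hc]

namespace Equiv.Perm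

variable {X : Type*}

theorem disjoint_of_support_subset {σ τ : Perm X} {A B : Set X} (hAB : _root_.Disjoint A B)
    (hσ : {x | σ x ≠ x} ⊆ A) (hτ : {x | τ x ≠ x} ⊆ B) : σ.Disjoint τ := fun x => by
  by_contra! hx
  exact hAB.ne_of_mem (hσ hx.1) (hτ hx.2) rfl

theorem support_conj_subset_image (f : Perm X) {g : Perm X} {I : Set X}
    (hg : {x | g x ≠ x} ⊆ I) : {x | (f * g * f⁻¹) x ≠ x} ⊆ f '' I := fun x hx =>
  ⟨f⁻¹ x, hg fun hfix => hx (by rw [Perm.mul_apply, Perm.mul_apply, hfix]; simp), by simp⟩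

theorem commute_conj_of_support_subset {f g h : Perm X} {I : Set X}
    (hI : _root_.Disjoint (f '' I) I)
    (hg : {x | g x ≠ x} ⊆ I) (hh : {x | h x ≠ x} ⊆ I) : Commute (f * g * f⁻¹) h :=
  (disjoint_of_support_subset hI (support_conj_subset_image f hg) hh).commute

end Equiv.Perm

theorem stmt_9_general {X : Type*} (N L : Subgroup (Equiv.Perm X))
    (hnorm : ∀ l ∈ L, ∀ n : Equiv.Perm X, n ∈ N ↔ l * n * l⁻¹ ∈ N)
    (f : Equiv.Perm X) (hf : f ∈ N) (I : Set X) (hI : f '' I ∩ I = ∅) :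
    ∀ g h : Equiv.Perm X, g ∈ L → h ∈ L →
      {x : X | g x ≠ x} ⊆ I → {x : X | h x ≠ x} ⊆ I → ⁅g, h⁆ ∈ N := by
  intro g h hg hh hgI hhI
  have hLN : L ≤ Subgroup.normalizer (N : Set (Equiv.Perm X)) := fun l hl =>
    Subgroup.mem_normalizer_iff.mpr (hnorm l hl)
  have hgf : ⁅g, f⁆ ∈ N :=
    Subgroup.le_normalizer_iff_commutator_le_right.mp hLN (Subgroup.commutator_mem_commutator hg hf)
  have hc : Commute (f * g * f⁻¹) h := Equiv.Perm.commute_conj_of_support_subset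
    (Set.disjoint_iff_inter_eq_empty.mpr hI) hgI hhI
  rw [← commutatorElement_commutatorElement_left_of_commute hc]
  exact Subgroup.le_normalizer_iff_commutator_le_left.mp hLN
    (Subgroup.commutator_mem_commutator hgf hh)

theorem stmt_9 {X : Type*} (G N L : Subgroup (Equiv.Perm X))
    (hNG : N ≤ G) (hLG : L ≤ G)
    (hnorm : ∀ l ∈ L, ∀ n : Equiv.Perm X, n ∈ N ↔ l * n * l⁻¹ ∈ N)
    (f : Equiv.Perm X) (hf : f ∈ N) (I : Set X) (hI : f '' I ∩ I = ∅) :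
    ∀ g h : Equiv.Perm X, g ∈ L → h ∈ L →
      {x : X | g x ≠ x} ⊆ I → {x : X | h x ≠ x} ⊆ I → ⁅g, h⁆ ∈ N :=
  stmt_9_general N L hnorm f hf I hI
end
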